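/- arXiv:1405.6286 — 2 statements merged into one kernel-verified Lean document; each statement's English description precedes it below -/
import Mathlib

section
/- Let S be a finite set partitioned into pairwise disjoint nonempty subsets {0}, L_1, L_2, …, L_d (a distinguished root state 0 and d levels), let α ∈ (0,1), let E be a row-stochastic matrix on S, and let π be a probability vector on S with π E = π. Assume: (i) E_{0,0} = 1 − α and E_{0,u} = 0 for every u not in {0} ∪ L_1 (hence Σ_{u ∈ L_1} E_{0,u} = α); (ii) for every 1 ≤ l ≤ d − 1 and every v ∈ L_l, E_{v,u} = 0 for every u not in L_{l+1}; (iii) for every v ∈ L_d, E_{v,0} = 1 and E_{v,u} = 0 for every u ≠ 0. Then π(0) = 1/(1 + α d), and moreover Σ_{u ∈ L_l} π(u) = α/(1 + α d) for every l = 1, …, d. -/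
open Finset

/-- Let `S` be a finite set partitioned into pairwise disjoint nonempty
subsets `{root}, L 1, …, L d`, let `α ∈ (0,1)`, let `E` be a row-stochastic matrix
on `S`, and let `π` be a probability vector with `π E = π`.  Assume:
(i) `E root root = 1 - α` and `E root u = 0` for every `u ∉ {root} ∪ L 1`;
(ii) for `1 ≤ l ≤ d - 1`, every `v ∈ L l` satisfies `E v u = 0` for `u ∉ L (l+1)`;
(iii) every `v ∈ L d` satisfies `E v root = 1` and `E v u = 0` for `u ≠ root`.
Then `π root = 1 / (1 + α d)`, and `∑_{u ∈ L l} π u = α / (1 + α d)` for every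
`l = 1, …, d`. -/
theorem stmt_4 {S : Type*} [Fintype S] [DecidableEq S]
    (d : ℕ) (hd : 1 ≤ d) (root : S) (L : ℕ → Finset S) (α : ℝ)
    (hα0 : 0 < α) (hα1 : α < 1)
    (hrootL : ∀ l : ℕ, 1 ≤ l → l ≤ d → root ∉ L l)
    (hLne : ∀ l : ℕ, 1 ≤ l → l ≤ d → (L l).Nonempty)
    (hLdisj : ∀ l l' : ℕ, 1 ≤ l → l ≤ d → 1 ≤ l' → l' ≤ d → l ≠ l' →
      Disjoint (L l) (L l'))
    (hcover : ∀ u : S, u ≠ root → ∃ l : ℕ, 1 ≤ l ∧ l ≤ d ∧ u ∈ L l)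
    (E : Matrix S S ℝ) (π : S → ℝ)
    (hE0 : ∀ i j : S, 0 ≤ E i j) (hE1 : ∀ i : S, ∑ j, E i j = 1)
    (hπ0 : ∀ i : S, 0 ≤ π i) (hπ1 : ∑ i, π i = 1)
    (hπE : ∀ j : S, ∑ i, π i * E i j = π j)
    (h1 : E root root = 1 - α)
    (h1' : ∀ u : S, u ≠ root → u ∉ L 1 → E root u = 0)
    (h2 : ∀ l : ℕ, 1 ≤ l → l ≤ d - 1 → ∀ v ∈ L l, ∀ u : S, u ∉ L (l + 1) → E v u = 0)
    (h3 : ∀ v ∈ L d, E v root = 1 ∧ ∀ u : S, u ≠ root → E v u = 0) :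
    π root = 1 / (1 + α * d) ∧
    ∀ l : ℕ, 1 ≤ l → l ≤ d → ∑ u ∈ L l, π u = α / (1 + α * d) := by
  -- base: level-1 mass equals α * π root
  have base : ∑ u ∈ L 1, π u = α * π root := by
    have hrootsum : ∑ u ∈ L 1, E root u = α := by
      have h := hE1 root
      rw [← Finset.sum_subset (Finset.subset_univ (insert root (L 1)))] at h
      · rw [Finset.sum_insert (hrootL 1 le_rfl hd)] at h
        linarith [h.symm ▸ h1 ▸ h]
      · intro x _ hx
        simp only [Finset.mem_insert, not_or] at hx
        exact h1' x hx.1 hx.2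
    calc ∑ u ∈ L 1, π u = ∑ u ∈ L 1, ∑ i, π i * E i u := by
          exact Finset.sum_congr rfl fun u _ => (hπE u).symm
      _ = ∑ i, ∑ u ∈ L 1, π i * E i u := Finset.sum_comm
      _ = ∑ i, π i * ∑ u ∈ L 1, E i u := by
          exact Finset.sum_congr rfl fun i _ => (Finset.mul_sum _ _ _).symm
      _ = π root * ∑ u ∈ L 1, E root u := by
          apply Fintype.sum_eq_single
          intro i hi
          obtain ⟨l', hl'1, hl'd, hiL⟩ := hcover i hi
          have hz : ∑ u ∈ L 1, E i u = 0 := by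
            apply Finset.sum_eq_zero
            intro u hu
            by_cases hld : l' = d
            · subst hld
              exact (h3 i hiL).2 u (fun h => hrootL 1 le_rfl hd (h ▸ hu))
            · have hlt : l' ≤ d - 1 := by omega
              apply h2 l' hl'1 hlt i hiL u
              intro huL
              have hdis := hLdisj 1 (l' + 1) le_rfl hd (by omega) (by omega) (by omega)
              exact (Finset.disjoint_left.mp hdis hu) huL
          rw [hz, mul_zero]
      _ = α * π root := by rw [hrootsum, mul_comm]
  -- step: mass is preserved from level l to level l+1
  have step : ∀ l : ℕ, 1 ≤ l → l + 1 ≤ d →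
      ∑ u ∈ L (l + 1), π u = ∑ u ∈ L l, π u := by
    intro l hl1 hld
    have hld1 : l ≤ d - 1 := by omega
    calc ∑ u ∈ L (l + 1), π u = ∑ u ∈ L (l + 1), ∑ i, π i * E i u := by
          exact Finset.sum_congr rfl fun u _ => (hπE u).symm
      _ = ∑ i, ∑ u ∈ L (l + 1), π i * E i u := Finset.sum_comm
      _ = ∑ i, π i * ∑ u ∈ L (l + 1), E i u := by
          exact Finset.sum_congr rfl fun i _ => (Finset.mul_sum _ _ _).symm
      _ = ∑ i, (if i ∈ L l then π i else 0) := by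
          apply Finset.sum_congr rfl
          intro i _
          by_cases hiL : i ∈ L l
          · rw [if_pos hiL]
            have hrow : ∑ u ∈ L (l + 1), E i u = 1 := by
              have h := hE1 i
              rw [← Finset.sum_subset (Finset.subset_univ (L (l + 1)))] at h
              · exact h
              · intro x _ hx
                exact h2 l hl1 hld1 i hiL x hx
            rw [hrow, mul_one]
          · rw [if_neg hiL]
            have hz : ∑ u ∈ L (l + 1), E i u = 0 := by
              apply Finset.sum_eq_zero
              intro u hu
              have huroot : u ≠ root := fun h => hrootL (l + 1) (by omega) hld (h ▸ hu)
              by_cases hiroot : i = root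
              · subst hiroot
                apply h1' u huroot
                intro hu1
                have hdis := hLdisj 1 (l + 1) le_rfl hd (by omega) hld (by omega)
                exact (Finset.disjoint_left.mp hdis hu1) hu
              · obtain ⟨l', hl'1, hl'd, hiL'⟩ := hcover i hiroot
                have hll' : l' ≠ l := fun h => hiL (h ▸ hiL')
                by_cases hlEq : l' = d
                · subst hlEq
                  exact (h3 i hiL').2 u huroot
                · have hlt : l' ≤ d - 1 := by omega
                  apply h2 l' hl'1 hlt i hiL' u
                  intro huL
                  have hdis := hLdisj (l + 1) (l' + 1) (by omega) hld (by omega)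
                    (by omega) (by omega)
                  exact (Finset.disjoint_left.mp hdis hu) huL
            rw [hz, mul_zero]
      _ = ∑ u ∈ L l, π u := by
          rw [Finset.sum_ite_mem]
          congr 1
          exact Finset.univ_inter _
  -- every level has mass α * π root
  have key : ∀ l : ℕ, 1 ≤ l → l ≤ d → ∑ u ∈ L l, π u = α * π root := by
    intro l hl
    induction l, hl using Nat.le_induction with
    | base => intro _; exact base
    | succ n hn ih =>
      intro h
      rw [step n hn h, ih (by omega)]
  -- total mass decomposition
  have hUeq : (Finset.univ : Finset S) = insert root ((Finset.Icc 1 d).biUnion L) := by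
    ext u
    simp only [Finset.mem_univ, Finset.mem_insert, Finset.mem_biUnion, Finset.mem_Icc,
      true_iff]
    by_cases hu : u = root
    · exact Or.inl hu
    · obtain ⟨l, hl1, hld, hL⟩ := hcover u hu
      exact Or.inr ⟨l, ⟨hl1, hld⟩, hL⟩
  have hrootnot : root ∉ (Finset.Icc 1 d).biUnion L := by
    simp only [Finset.mem_biUnion, Finset.mem_Icc, not_exists]
    rintro l ⟨⟨hl1, hld⟩, hL⟩
    exact hrootL l hl1 hld hL
  have hpair : (↑(Finset.Icc 1 d) : Set ℕ).PairwiseDisjoint L := by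
    intro a ha b hb hab
    simp only [Finset.coe_Icc, Set.mem_Icc] at ha hb
    exact hLdisj a b ha.1 ha.2 hb.1 hb.2 hab
  have htotal : (1 : ℝ) = π root + (d : ℝ) * (α * π root) := by
    calc (1 : ℝ) = ∑ i, π i := hπ1.symm
      _ = π root + ∑ l ∈ Finset.Icc 1 d, ∑ u ∈ L l, π u := by
          rw [hUeq, Finset.sum_insert hrootnot, Finset.sum_biUnion hpair]
      _ = π root + ∑ l ∈ Finset.Icc 1 d, α * π root := by
          congr 1
          apply Finset.sum_congr rfl
          intro l hl
          simp only [Finset.mem_Icc] at hl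
          exact key l hl.1 hl.2
      _ = π root + (d : ℝ) * (α * π root) := by
          rw [Finset.sum_const, Nat.card_Icc]
          simp [nsmul_eq_mul]
  have hpos : (0 : ℝ) < 1 + α * d := by positivity
  have hroot : π root = 1 / (1 + α * d) := by
    field_simp
    nlinarith [htotal]
  refine ⟨hroot, fun l hl1 hld => ?_⟩
  rw [key l hl1 hld, hroot]
  field_simp
end

section
/- Consider the following restricted fractional knapsack problem. There is a finite set of materials indexed by pairs (i,k) with i ∈ {1,…,N} (groups) and k ∈ {1,…,d}; material (i,k) has value p_{i,k} ≥ 0 and weight w_i > 0 (all materials in group i share the weight w_i), a per-material cap c_{i,k} ∈ [0, ∞), and the knapsack has capacity C ≥ 0. A placement u = (u_{i,k}) is feasible if 0 ≤ u_{i,k} ≤ c_{i,k} for all (i,k), Σ_{k=1}^d u_{i,k} ≤ 1 for every group i, and Σ_{i=1}^N w_i · Σ_{k=1}^d u_{i,k} ≤ C. Let σ be any ordering of the materials by nonincreasing value-per-unit-weight p_{i,k}/w_i, and define the greedy placement u^g by processing materials in the order σ and assigning to each material (i,k) the amount u^g_{i,k} = min{ c_{i,k}, 1 − (total amount already assigned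 to materials in group i), (C − total weight already used)/w_i }. Then u^g is feasible and optimal: for every feasible placement u, Σ_{i,k} p_{i,k} · u_{i,k} ≤ Σ_{i,k} p_{i,k} · u^g_{i,k}. -/
open Finset

/-- Greedy placement for the restricted fractional knapsack problem.  Materials are
pairs `(i, k) ∈ Fin N × Fin d`; material `(i,k)` has weight `w i`, per-material cap
`c i k`, and the knapsack has capacity `C`.  The materials are processed in the
order given by the enumeration `e : Fin (N * d) ≃ Fin N × Fin d`; when material
`e m` is processed, it receives the largest amount compatible with its cap, the
group budget `1` of its group, and the remaining knapsack capacity.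
`greedyAlloc w c C e m` is the placement after the first `m` materials are
processed; the greedy placement is `greedyAlloc w c C e (N * d)`. -/
noncomputable def greedyAlloc {N d : ℕ} (w : Fin N → ℝ) (c : Fin N → Fin d → ℝ)
    (C : ℝ) (e : Fin (N * d) ≃ Fin N × Fin d) : ℕ → Fin N × Fin d → ℝ
  | 0 => fun _ => 0
  | (m + 1) =>
      let g := greedyAlloc w c C e m
      if h : m < N * d then
        Function.update g (e ⟨m, h⟩)
          (min (c (e ⟨m, h⟩).1 (e ⟨m, h⟩).2)
            (min (1 - ∑ k : Fin d, g ((e ⟨m, h⟩).1, k))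
              ((C - ∑ q : Fin N × Fin d, w q.1 * g q) / w (e ⟨m, h⟩).1)))
      else g

namespace Stmt8Aux

variable {N d : ℕ} (w : Fin N → ℝ) (c : Fin N → Fin d → ℝ) (C : ℝ) (e : Fin (N * d) ≃ Fin N × Fin d)

lemma greedy_succ (m : ℕ) (h : m < N * d) :
    greedyAlloc w c C e (m + 1) =
      Function.update (greedyAlloc w c C e m) (e ⟨m, h⟩)
        (min (c (e ⟨m, h⟩).1 (e ⟨m, h⟩).2)
          (min (1 - ∑ k : Fin d, greedyAlloc w c C e m ((e ⟨m, h⟩).1, k))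
            ((C - ∑ q : Fin N × Fin d, w q.1 * greedyAlloc w c C e m q) / w (e ⟨m, h⟩).1))) := by
  rw [greedyAlloc]; simp only [dif_pos h]

lemma greedy_succ_not (m : ℕ) (h : ¬ m < N * d) :
    greedyAlloc w c C e (m + 1) = greedyAlloc w c C e m := by
  rw [greedyAlloc]; simp only [dif_neg h]

lemma greedy_zero_of_le (t : ℕ) (q : Fin N × Fin d) (hq : t ≤ (e.symm q : ℕ)) :
    greedyAlloc w c C e t q = 0 := by
  induction t with
  | zero => rfl
  | succ t ih =>
    by_cases h : t < N * d
    · rw [greedy_succ w c C e t h, Function.update_of_ne, ih (Nat.le_of_succ_le hq)]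
      intro hqe
      have : (e.symm q : ℕ) = t := by rw [hqe, Equiv.symm_apply_apply]
      omega
    · rw [greedy_succ_not w c C e t h]
      exact ih (Nat.le_of_succ_le hq)

lemma greedy_frozen (s t : ℕ) (hst : s ≤ t) (q : Fin N × Fin d) (hq : (e.symm q : ℕ) < s) :
    greedyAlloc w c C e t q = greedyAlloc w c C e s q := by
  induction t, hst using Nat.le_induction with
  | base => rfl
  | succ t hst ih =>
    by_cases h : t < N * d
    · rw [greedy_succ w c C e t h, Function.update_of_ne, ih]
      intro hqe
      have : (e.symm q : ℕ) = t := by rw [hqe, Equiv.symm_apply_apply]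
      omega
    · rw [greedy_succ_not w c C e t h, ih]

lemma greedy_at_self (t : ℕ) (h : t < N * d) :
    greedyAlloc w c C e t (e ⟨t, h⟩) = 0 :=
  greedy_zero_of_le w c C e t _ (by rw [Equiv.symm_apply_apply])

lemma sum_update_total (f : Fin N × Fin d → ℝ) (q : Fin N × Fin d) (a : ℝ) (hf : f q = 0) :
    ∑ r : Fin N × Fin d, w r.1 * Function.update f q a r
      = (∑ r : Fin N × Fin d, w r.1 * f r) + w q.1 * a := by
  have h1 : ∀ r : Fin N × Fin d, w r.1 * Function.update f q a r
      = w r.1 * f r + (if r = q then w q.1 * a else 0) := by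
    intro r
    rcases eq_or_ne r q with rfl | hr
    · simp [hf]
    · simp [Function.update_of_ne hr, hr]
  simp only [h1, Finset.sum_add_distrib, Finset.sum_ite_eq' Finset.univ, Finset.mem_univ,
    if_true]

lemma sum_update_fst (f : Fin N × Fin d → ℝ) (q : Fin N × Fin d) (a : ℝ) (hf : f q = 0) :
    ∑ k : Fin d, Function.update f q a (q.1, k) = (∑ k : Fin d, f (q.1, k)) + a := by
  have h1 : ∀ k : Fin d, Function.update f q a (q.1, k)
      = f (q.1, k) + (if k = q.2 then a else 0) := by
    intro k
    rcases eq_or_ne k q.2 with rfl | hk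
    · have hq : (q.1, q.2) = q := rfl
      rw [hq]
      simp [hf]
    · have hne : (q.1, k) ≠ q := fun h => hk (congrArg Prod.snd h)
      simp [Function.update_of_ne hne, hk]
  simp only [h1, Finset.sum_add_distrib, Finset.sum_ite_eq' Finset.univ, Finset.mem_univ,
    if_true]

lemma sum_update_ne (f : Fin N × Fin d → ℝ) (q : Fin N × Fin d) (a : ℝ) (i : Fin N)
    (hi : i ≠ q.1) :
    ∑ k : Fin d, Function.update f q a (i, k) = ∑ k : Fin d, f (i, k) := by
  refine Finset.sum_congr rfl fun k _ => ?_
  exact Function.update_of_ne (fun h => hi (congrArg Prod.fst h)) _ _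

lemma greedy_feas (hw : ∀ i, 0 < w i) (hc : ∀ i k, 0 ≤ c i k) (hC : 0 ≤ C) (t : ℕ) :
    (∀ q : Fin N × Fin d, 0 ≤ greedyAlloc w c C e t q ∧ greedyAlloc w c C e t q ≤ c q.1 q.2) ∧
    (∀ i, ∑ k : Fin d, greedyAlloc w c C e t (i, k) ≤ 1) ∧
    (∑ q : Fin N × Fin d, w q.1 * greedyAlloc w c C e t q ≤ C) := by
  induction t with
  | zero =>
    refine ⟨fun q => ⟨le_refl _, hc _ _⟩, fun i => ?_, ?_⟩
    · simp [greedyAlloc]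
    · simp [greedyAlloc]; exact hC
  | succ t ih =>
    by_cases h : t < N * d
    · obtain ⟨ih1, ih2, ih3⟩ := ih
      set q : Fin N × Fin d := e ⟨t, h⟩ with hqdef
      have hq0 : greedyAlloc w c C e t q = 0 := greedy_at_self w c C e t h
      set S : ℝ := ∑ k : Fin d, greedyAlloc w c C e t (q.1, k) with hS
      set W : ℝ := ∑ r : Fin N × Fin d, w r.1 * greedyAlloc w c C e t r with hW
      set a : ℝ := min (c q.1 q.2) (min (1 - S) ((C - W) / w q.1)) with ha
      have hstep : greedyAlloc w c C e (t + 1) =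
          Function.update (greedyAlloc w c C e t) q a := greedy_succ w c C e t h
      have ha0 : 0 ≤ a :=
        le_min (hc _ _) (le_min (by linarith [ih2 q.1]) (div_nonneg (by linarith) (hw _).le))
      have haS : a ≤ 1 - S := (min_le_right _ _).trans (min_le_left _ _)
      have haW : a ≤ (C - W) / w q.1 := (min_le_right _ _).trans (min_le_right _ _)
      refine ⟨fun r => ?_, fun i => ?_, ?_⟩
      · rw [hstep]
        rcases eq_or_ne r q with rfl | hr
        · rw [Function.update_self]; exact ⟨ha0, min_le_left _ _⟩
        · rw [Function.update_of_ne hr]; exact ih1 r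
      · rw [hstep]
        rcases eq_or_ne i q.1 with rfl | hi
        · rw [sum_update_fst _ _ _ hq0]; linarith
        · rw [sum_update_ne _ _ _ _ hi]; exact ih2 i
      · rw [hstep, sum_update_total w _ _ _ hq0]
        have : a * w q.1 ≤ C - W := (le_div_iff₀ (hw q.1)).mp haW
        nlinarith
    · rw [greedy_succ_not w c C e t h]; exact ih

/-- prefix restriction of a placement according to the processing order -/
def uPre (e : Fin (N * d) ≃ Fin N × Fin d) (u : Fin N → Fin d → ℝ) (t : ℕ) :
    Fin N × Fin d → ℝ :=
  fun q => if (e.symm q : ℕ) < t then u q.1 q.2 else 0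

variable (u : Fin N → Fin d → ℝ)

lemma uPre_zero : uPre e u 0 = fun _ => 0 := by
  funext q; simp [uPre]

lemma uPre_succ (t : ℕ) (h : t < N * d) :
    uPre e u (t + 1) = Function.update (uPre e u t) (e ⟨t, h⟩) (u (e ⟨t, h⟩).1 (e ⟨t, h⟩).2) := by
  funext q
  rcases eq_or_ne q (e ⟨t, h⟩) with rfl | hq
  · rw [Function.update_self]
    simp [uPre]
  · rw [Function.update_of_ne hq]
    have hne : (e.symm q : ℕ) ≠ t := by
      intro hh
      apply hq
      have : e.symm q = ⟨t, h⟩ := Fin.ext hh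
      rw [← this, Equiv.apply_symm_apply]
    simp only [uPre]
    by_cases hlt : (e.symm q : ℕ) < t
    · rw [if_pos hlt, if_pos (by omega)]
    · rw [if_neg hlt, if_neg (by omega)]

lemma uPre_succ_not (t : ℕ) (h : ¬ t < N * d) :
    uPre e u (t + 1) = uPre e u t := by
  funext q
  have hq : (e.symm q : ℕ) < N * d := (e.symm q).isLt
  simp only [uPre]
  have h1 : (e.symm q : ℕ) < t + 1 := by omega
  have h2 : (e.symm q : ℕ) < t := by omega
  rw [if_pos h1, if_pos h2]

lemma uPre_at_self (t : ℕ) (h : t < N * d) : uPre e u t (e ⟨t, h⟩) = 0 := by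
  simp [uPre]

lemma uPre_nonneg (hu : ∀ i k, 0 ≤ u i k) (t : ℕ) (q : Fin N × Fin d) :
    0 ≤ uPre e u t q := by
  simp only [uPre]; split_ifs; exacts [hu _ _, le_refl _]

lemma uPre_le (hu : ∀ i k, 0 ≤ u i k) (t : ℕ) (q : Fin N × Fin d) :
    uPre e u t q ≤ u q.1 q.2 := by
  simp only [uPre]; split_ifs; exacts [le_refl _, hu _ _]

lemma greedy_inv (hw : ∀ i, 0 < w i) (hc : ∀ i k, 0 ≤ c i k) (hC : 0 ≤ C)
    (hu : ∀ i k, 0 ≤ u i k ∧ u i k ≤ c i k) (hu1 : ∀ i, ∑ k, u i k ≤ 1) (t : ℕ) :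
    (∑ q : Fin N × Fin d, w q.1 * greedyAlloc w c C e t q = C) ∨
    (∀ i, ∑ k : Fin d, uPre e u t (i, k) ≤ ∑ k : Fin d, greedyAlloc w c C e t (i, k)) := by
  have hu0 : ∀ i k, 0 ≤ u i k := fun i k => (hu i k).1
  induction t with
  | zero =>
    right
    intro i
    simp only [uPre_zero]
    simp [greedyAlloc]
  | succ t ih =>
    by_cases h : t < N * d
    · obtain ⟨ih1, ih2, ih3⟩ := greedy_feas w c C e hw hc hC t
      set q : Fin N × Fin d := e ⟨t, h⟩ with hqdef
      have hq0 : greedyAlloc w c C e t q = 0 := greedy_at_self w c C e t h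
      have hu0q : uPre e u t q = 0 := uPre_at_self e u t h
      set S : ℝ := ∑ k : Fin d, greedyAlloc w c C e t (q.1, k) with hS
      set W : ℝ := ∑ r : Fin N × Fin d, w r.1 * greedyAlloc w c C e t r with hW
      set a : ℝ := min (c q.1 q.2) (min (1 - S) ((C - W) / w q.1)) with ha
      have hstep : greedyAlloc w c C e (t + 1) =
          Function.update (greedyAlloc w c C e t) q a := greedy_succ w c C e t h
      have hustep : uPre e u (t + 1) =
          Function.update (uPre e u t) q (u q.1 q.2) := uPre_succ e u t h
      have hS1 : S ≤ 1 := ih2 q.1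
      have haW : a = min (min (c q.1 q.2) (1 - S)) ((C - W) / w q.1) := (min_assoc _ _ _).symm
      rcases ih with hWC | hU
      · -- capacity already full : stays full
        left
        have hb : (C - W) / w q.1 = 0 := by rw [hWC]; simp
        have ha0 : a = 0 := by
          rw [ha, hb, min_eq_right (by linarith : (0:ℝ) ≤ 1 - S),
            min_eq_right (hc q.1 q.2)]
        rw [hstep, sum_update_total w _ _ _ hq0, ha0, ← hW, hWC]
        ring
      · rcases le_total (min (c q.1 q.2) (1 - S)) ((C - W) / w q.1) with hle | hle
        · -- group/cap bound binds
          right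
          have haval : a = min (c q.1 q.2) (1 - S) := by rw [haW, min_eq_left hle]
          intro i
          rcases eq_or_ne i q.1 with rfl | hi
          · rw [hstep, hustep, sum_update_fst _ _ _ hq0, sum_update_fst _ _ _ hu0q]
            have h1 : (∑ k : Fin d, uPre e u t (q.1, k)) + u q.1 q.2 ≤ 1 := by
              calc (∑ k : Fin d, uPre e u t (q.1, k)) + u q.1 q.2
                  = ∑ k : Fin d, Function.update (uPre e u t) q (u q.1 q.2) (q.1, k) := by
                    rw [sum_update_fst _ _ _ hu0q]
                _ ≤ ∑ k : Fin d, u q.1 k := by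
                    refine Finset.sum_le_sum fun k _ => ?_
                    rw [← uPre_succ e u t h]
                    exact uPre_le e u hu0 (t + 1) (q.1, k)
                _ ≤ 1 := hu1 q.1
            have h2 : (∑ k : Fin d, uPre e u t (q.1, k)) + u q.1 q.2 ≤ S + c q.1 q.2 := by
              have := hU q.1
              have := (hu q.1 q.2).2
              linarith
            have hrhs : S + a = min (S + c q.1 q.2) 1 := by
              rw [haval, ← min_add_add_left]
              congr 1
              ring
            rw [hrhs]
            exact le_min h2 h1
          · rw [hstep, hustep, sum_update_ne _ _ _ _ hi, sum_update_ne _ _ _ _ hi]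
            exact hU i
        · -- capacity bound binds : becomes full
          left
          have haval : a = (C - W) / w q.1 := by rw [haW, min_eq_right hle]
          rw [hstep, sum_update_total w _ _ _ hq0, haval, ← hW,
            mul_div_cancel₀ _ (hw q.1).ne']
          ring
    · rw [greedy_succ_not w c C e t h, uPre_succ_not e u t h]
      exact ih

lemma X_le_W (hw : ∀ i, 0 < w i) (hc : ∀ i k, 0 ≤ c i k) (hC : 0 ≤ C)
    (hu : ∀ i k, 0 ≤ u i k ∧ u i k ≤ c i k) (hu1 : ∀ i, ∑ k, u i k ≤ 1)
    (huC : ∑ i, w i * ∑ k, u i k ≤ C) (t : ℕ) :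
    ∑ q : Fin N × Fin d, w q.1 * uPre e u t q ≤
      ∑ q : Fin N × Fin d, w q.1 * greedyAlloc w c C e t q := by
  have hu0 : ∀ i k, 0 ≤ u i k := fun i k => (hu i k).1
  rcases greedy_inv w c C e u hw hc hC hu hu1 t with hWC | hU
  · rw [hWC]
    calc ∑ q : Fin N × Fin d, w q.1 * uPre e u t q
        ≤ ∑ q : Fin N × Fin d, w q.1 * u q.1 q.2 :=
          Finset.sum_le_sum fun q _ =>
            mul_le_mul_of_nonneg_left (uPre_le e u hu0 t q) (hw q.1).le
      _ = ∑ i, w i * ∑ k, u i k := by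
          rw [Fintype.sum_prod_type]
          exact Finset.sum_congr rfl fun i _ => by rw [Finset.mul_sum]
      _ ≤ C := huC
  · have conv : ∀ f : Fin N × Fin d → ℝ,
        ∑ q : Fin N × Fin d, w q.1 * f q = ∑ i, w i * ∑ k, f (i, k) := by
      intro f
      rw [Fintype.sum_prod_type]
      refine Finset.sum_congr rfl fun i _ => ?_
      rw [Finset.mul_sum]
    rw [conv, conv]
    refine Finset.sum_le_sum fun i _ => ?_
    exact mul_le_mul_of_nonneg_left (hU i) (hw i).le

lemma prefix_u (t : ℕ) :
    ∑ m ∈ Finset.range t,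
        (if h : m < N * d then w (e ⟨m, h⟩).1 * u (e ⟨m, h⟩).1 (e ⟨m, h⟩).2 else 0)
      = ∑ q : Fin N × Fin d, w q.1 * uPre e u t q := by
  induction t with
  | zero => simp [uPre_zero]
  | succ t ih =>
    rw [Finset.sum_range_succ, ih]
    by_cases h : t < N * d
    · rw [dif_pos h, uPre_succ e u t h,
        sum_update_total w _ _ _ (uPre_at_self e u t h)]
    · rw [dif_neg h, uPre_succ_not e u t h]
      ring

lemma prefix_g (t : ℕ) (ht : t ≤ N * d) :
    ∑ m ∈ Finset.range t,
        (if h : m < N * d then w (e ⟨m, h⟩).1 * greedyAlloc w c C e (N * d) (e ⟨m, h⟩) else 0)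
      = ∑ q : Fin N × Fin d, w q.1 * greedyAlloc w c C e t q := by
  induction t with
  | zero => simp [greedyAlloc]
  | succ t ih =>
    have h : t < N * d := ht
    rw [Finset.sum_range_succ, ih (le_of_lt h), dif_pos h]
    have hfrozen : greedyAlloc w c C e (N * d) (e ⟨t, h⟩)
        = greedyAlloc w c C e (t + 1) (e ⟨t, h⟩) :=
      greedy_frozen w c C e (t + 1) (N * d) ht _
        (by rw [Equiv.symm_apply_apply]; exact Nat.lt_succ_self t)
    rw [hfrozen, greedy_succ w c C e t h, Function.update_self,
      sum_update_total w _ _ _ (greedy_at_self w c C e t h)]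

lemma abel_aux (M : ℕ) (r x y : ℕ → ℝ) (hr0 : ∀ m, 0 ≤ r m) (hrmono : ∀ m, r (m + 1) ≤ r m)
    (hz : ∀ t, t ≤ M → ∑ m ∈ Finset.range t, x m ≤ ∑ m ∈ Finset.range t, y m) :
    ∑ m ∈ Finset.range M, r m * x m ≤ ∑ m ∈ Finset.range M, r m * y m := by
  have claim : ∀ t, t ≤ M →
      ∑ m ∈ Finset.range t, r m * (x m - y m) ≤
        (if t < M then r t else 0) *
          ((∑ m ∈ Finset.range t, x m) - ∑ m ∈ Finset.range t, y m) := by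
    intro t
    induction t with
    | zero => intro _; simp
    | succ t iht =>
      intro ht
      have htM : t < M := ht
      have hZ : (∑ m ∈ Finset.range (t + 1), x m) - ∑ m ∈ Finset.range (t + 1), y m ≤ 0 :=
        sub_nonpos.mpr (hz (t + 1) ht)
      have hrho : (if t + 1 < M then r (t + 1) else 0) ≤ r t := by
        split_ifs
        · exact hrmono t
        · exact hr0 t
      calc ∑ m ∈ Finset.range (t + 1), r m * (x m - y m)
          = (∑ m ∈ Finset.range t, r m * (x m - y m)) + r t * (x t - y t) :=
            Finset.sum_range_succ _ t
        _ ≤ (if t < M then r t else 0) *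
              ((∑ m ∈ Finset.range t, x m) - ∑ m ∈ Finset.range t, y m)
              + r t * (x t - y t) := by
            have := iht (le_of_lt htM)
            linarith
        _ = r t * ((∑ m ∈ Finset.range (t + 1), x m) - ∑ m ∈ Finset.range (t + 1), y m) := by
            rw [if_pos htM, Finset.sum_range_succ x t, Finset.sum_range_succ y t]
            ring
        _ ≤ (if t + 1 < M then r (t + 1) else 0) *
              ((∑ m ∈ Finset.range (t + 1), x m) - ∑ m ∈ Finset.range (t + 1), y m) :=
            mul_le_mul_of_nonpos_right hrho hZ
  have := claim M (le_refl M)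
  rw [if_neg (lt_irrefl M)] at this
  simp only [zero_mul] at this
  have hsub : ∑ m ∈ Finset.range M, r m * (x m - y m)
      = (∑ m ∈ Finset.range M, r m * x m) - ∑ m ∈ Finset.range M, r m * y m := by
    rw [← Finset.sum_sub_distrib]
    exact Finset.sum_congr rfl fun m _ => by ring
  linarith [hsub ▸ this]

lemma sum_prod_w (f : Fin N × Fin d → ℝ) :
    ∑ q : Fin N × Fin d, w q.1 * f q = ∑ i, w i * ∑ k, f (i, k) := by
  rw [Fintype.sum_prod_type]
  refine Finset.sum_congr rfl fun i _ => ?_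
  rw [Finset.mul_sum]

lemma value_eq (p : Fin N → Fin d → ℝ) (hw : ∀ i, 0 < w i) (v : Fin N × Fin d → ℝ) :
    ∑ i, ∑ k, p i k * v (i, k)
      = ∑ m ∈ Finset.range (N * d),
          (if h : m < N * d then p (e ⟨m, h⟩).1 (e ⟨m, h⟩).2 / w (e ⟨m, h⟩).1 else 0) *
          (if h : m < N * d then w (e ⟨m, h⟩).1 * v (e ⟨m, h⟩) else 0) := by
  have h1 : ∑ i, ∑ k, p i k * v (i, k) = ∑ q : Fin N × Fin d, p q.1 q.2 * v q :=
    (Fintype.sum_prod_type (fun q : Fin N × Fin d => p q.1 q.2 * v q)).symm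
  rw [h1, ← Equiv.sum_comp e (fun q : Fin N × Fin d => p q.1 q.2 * v q),
    ← Fin.sum_univ_eq_sum_range
      (fun m => (if h : m < N * d then p (e ⟨m, h⟩).1 (e ⟨m, h⟩).2 / w (e ⟨m, h⟩).1 else 0) *
        (if h : m < N * d then w (e ⟨m, h⟩).1 * v (e ⟨m, h⟩) else 0)) (N * d)]
  refine Finset.sum_congr rfl fun m _ => ?_
  simp only [dif_pos m.isLt, Fin.eta]
  have hwne : w (e m).1 ≠ 0 := (hw (e m).1).ne'
  field_simp

theorem stmt_8' (p : Fin N → Fin d → ℝ)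
    (hp : ∀ i k, 0 ≤ p i k) (hw : ∀ i, 0 < w i) (hc : ∀ i k, 0 ≤ c i k) (hC : 0 ≤ C)
    (hsorted : ∀ a b : Fin (N * d), a ≤ b →
      p (e b).1 (e b).2 / w (e b).1 ≤ p (e a).1 (e a).2 / w (e a).1) :
    (∀ i k, 0 ≤ greedyAlloc w c C e (N * d) (i, k) ∧
        greedyAlloc w c C e (N * d) (i, k) ≤ c i k) ∧
    (∀ i, ∑ k, greedyAlloc w c C e (N * d) (i, k) ≤ 1) ∧
    (∑ i, w i * ∑ k, greedyAlloc w c C e (N * d) (i, k) ≤ C) ∧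
    (∀ u : Fin N → Fin d → ℝ,
      (∀ i k, 0 ≤ u i k ∧ u i k ≤ c i k) →
      (∀ i, ∑ k, u i k ≤ 1) →
      (∑ i, w i * ∑ k, u i k ≤ C) →
      ∑ i, ∑ k, p i k * u i k ≤
        ∑ i, ∑ k, p i k * greedyAlloc w c C e (N * d) (i, k)) := by
  obtain ⟨hf1, hf2, hf3⟩ := greedy_feas w c C e hw hc hC (N * d)
  refine ⟨fun i k => hf1 (i, k), hf2, ?_, ?_⟩
  · rw [← sum_prod_w w]
    exact hf3
  · intro u hu hu1 huC
    set r : ℕ → ℝ := fun m =>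
      if h : m < N * d then p (e ⟨m, h⟩).1 (e ⟨m, h⟩).2 / w (e ⟨m, h⟩).1 else 0 with hr
    set x : ℕ → ℝ := fun m =>
      if h : m < N * d then w (e ⟨m, h⟩).1 * u (e ⟨m, h⟩).1 (e ⟨m, h⟩).2 else 0 with hx
    set y : ℕ → ℝ := fun m =>
      if h : m < N * d then w (e ⟨m, h⟩).1 * greedyAlloc w c C e (N * d) (e ⟨m, h⟩) else 0
      with hy
    have hr0 : ∀ m, 0 ≤ r m := by
      intro m
      rw [hr]
      dsimp only
      split_ifs
      · exact div_nonneg (hp _ _) (hw _).le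
      · exact le_refl 0
    have hrmono : ∀ m, r (m + 1) ≤ r m := by
      intro m
      rw [hr]
      dsimp only
      by_cases h1 : m + 1 < N * d
      · have h0 : m < N * d := by omega
        rw [dif_pos h1, dif_pos h0]
        exact hsorted ⟨m, h0⟩ ⟨m + 1, h1⟩ (by exact Nat.le_succ m)
      · rw [dif_neg h1]
        split_ifs
        · exact div_nonneg (hp _ _) (hw _).le
        · exact le_refl 0
    have hz : ∀ t, t ≤ N * d →
        ∑ m ∈ Finset.range t, x m ≤ ∑ m ∈ Finset.range t, y m := by
      intro t ht
      rw [hx, hy]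
      calc ∑ m ∈ Finset.range t,
            (if h : m < N * d then w (e ⟨m, h⟩).1 * u (e ⟨m, h⟩).1 (e ⟨m, h⟩).2 else 0)
          = ∑ q : Fin N × Fin d, w q.1 * uPre e u t q := prefix_u w e u t
        _ ≤ ∑ q : Fin N × Fin d, w q.1 * greedyAlloc w c C e t q :=
            X_le_W w c C e u hw hc hC hu hu1 huC t
        _ = _ := (prefix_g w c C e t ht).symm
    have habel := abel_aux (N * d) r x y hr0 hrmono hz
    have h1 : ∑ i, ∑ k, p i k * u i k = ∑ m ∈ Finset.range (N * d), r m * x m :=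
      value_eq w e p hw (fun q => u q.1 q.2)
    have h2 : ∑ i, ∑ k, p i k * greedyAlloc w c C e (N * d) (i, k)
        = ∑ m ∈ Finset.range (N * d), r m * y m :=
      value_eq w e p hw (fun q => greedyAlloc w c C e (N * d) q)
    rw [h1, h2]
    exact habel


end Stmt8Aux

/-- restricted fractional knapsack.  Materials `(i,k)` have values
`p i k ≥ 0`, group weights `w i > 0`, caps `c i k ≥ 0`, capacity `C ≥ 0`.  A
placement `u` is feasible if `0 ≤ u i k ≤ c i k`, each group total `∑ k, u i k ≤ 1`,
and the total weight `∑ i, w i * ∑ k, u i k ≤ C`.  If `e` orders the materials by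
nonincreasing value per unit of weight, then the greedy placement is feasible and
optimal: every feasible placement `u` has value at most that of the greedy one. -/
theorem stmt_8 {N d : ℕ} (p : Fin N → Fin d → ℝ) (w : Fin N → ℝ)
    (c : Fin N → Fin d → ℝ) (C : ℝ)
    (hp : ∀ i k, 0 ≤ p i k) (hw : ∀ i, 0 < w i) (hc : ∀ i k, 0 ≤ c i k) (hC : 0 ≤ C)
    (e : Fin (N * d) ≃ Fin N × Fin d)
    (hsorted : ∀ a b : Fin (N * d), a ≤ b →
      p (e b).1 (e b).2 / w (e b).1 ≤ p (e a).1 (e a).2 / w (e a).1) :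
    (∀ i k, 0 ≤ greedyAlloc w c C e (N * d) (i, k) ∧
        greedyAlloc w c C e (N * d) (i, k) ≤ c i k) ∧
    (∀ i, ∑ k, greedyAlloc w c C e (N * d) (i, k) ≤ 1) ∧
    (∑ i, w i * ∑ k, greedyAlloc w c C e (N * d) (i, k) ≤ C) ∧
    (∀ u : Fin N → Fin d → ℝ,
      (∀ i k, 0 ≤ u i k ∧ u i k ≤ c i k) →
      (∀ i, ∑ k, u i k ≤ 1) →
      (∑ i, w i * ∑ k, u i k ≤ C) →
      ∑ i, ∑ k, p i k * u i k ≤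
        ∑ i, ∑ k, p i k * greedyAlloc w c C e (N * d) (i, k)) := by
  exact Stmt8Aux.stmt_8' w c C e p hp hw hc hC hsorted
end
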